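/- arXiv:1312.0106 — 7 statements merged into one kernel-verified Lean document; each statement's English description precedes it below -/
import Mathlib

section
/- Let H and K be groups and ρ : H → K a surjective group homomorphism whose kernel is contained in the center Z(H). Let X be a subgroup of H and set P := ρ⁻¹(C_K(ρ(X))). Then the centralizer C_H(X) is a normal subgroup of P, and for every natural number k such that x^k = 1 for all x ∈ X, one has h^k ∈ C_H(X) for every h ∈ P; in other words, the exponent of P/C_H(X) divides the exponent of X. (First assertion of Lemma 1.2.1.) -/
/-! For `h ∈ P` and `x ∈ X` the commutator `⁅h, x⁆` lies in `ker ρ`, hence is central. Central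
commutators are bimultiplicative, so `⁅h ^ k, x⁆ = ⁅h, x⁆ ^ k = ⁅h, x ^ k⁆ = 1` whenever
`x ^ k = 1`; and conjugating `x ∈ X` by an element of `P` only multiplies it by a central
element, which preserves the centralizer of `X`. -/

open Subgroup
open scoped commutatorElement

section CentralCommutator

variable {G : Type*} [Group G] {g x : G}

theorem commutatorElement_pow_left_of_mem_center (hgx : ⁅g, x⁆ ∈ center G) (n : ℕ) :
    ⁅g ^ n, x⁆ = ⁅g, x⁆ ^ n := by
  induction n with
  | zero => simp
  | succ n ih =>
    have hcomm : g * ⁅g, x⁆ ^ n = ⁅g, x⁆ ^ n * g := mem_center_iff.mp (pow_mem hgx n) g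
    rw [pow_succ', commutatorElement_mul_left_eq_conj_mul, ih, hcomm, mul_inv_cancel_right,
      pow_succ]

theorem commutatorElement_pow_right_of_mem_center (hgx : ⁅g, x⁆ ∈ center G) (n : ℕ) :
    ⁅g, x ^ n⁆ = ⁅g, x⁆ ^ n := by
  have hxg : ⁅x, g⁆ ∈ center G := by simpa using inv_mem hgx
  rw [← commutatorElement_inv, commutatorElement_pow_left_of_mem_center hxg,
    ← commutatorElement_inv x, inv_pow]

theorem commute_pow_of_commutatorElement_mem_center (hgx : ⁅g, x⁆ ∈ center G) {n : ℕ}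
    (hx : x ^ n = 1) : Commute (g ^ n) x := by
  rw [← commutatorElement_eq_one_iff_commute, commutatorElement_pow_left_of_mem_center hgx,
    ← commutatorElement_pow_right_of_mem_center hgx, hx, commutatorElement_one_right]

theorem Commute.conj_right_of_commutatorElement_mem_center {c : G}
    (hgx : ⁅g, x⁆ ∈ center G) (hc : Commute c x) : Commute c (g * x * g⁻¹) := by
  rw [← MulAut.conj_apply, conj_eq_commutatorElement_mul]
  exact (show Commute c ⁅g, x⁆ from mem_center_iff.mp hgx c).mul_right hc

end CentralCommutator

section CentralKernel

variable {H K : Type*} [Group H] [Group K] (ρ : H →* K)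

theorem commutatorElement_mem_center_of_commute_map (hker : ρ.ker ≤ center H) {g x : H}
    (h : Commute (ρ g) (ρ x)) : ⁅g, x⁆ ∈ center H :=
  hker (by rw [MonoidHom.mem_ker, map_commutatorElement, h.commutator_eq])

theorem commutatorElement_mem_center_of_mem_comap_centralizer (hker : ρ.ker ≤ center H)
    {X : Subgroup H} {g x : H} (hg : g ∈ (centralizer (X.map ρ : Set K)).comap ρ)
    (hx : x ∈ X) : ⁅g, x⁆ ∈ center H :=
  commutatorElement_mem_center_of_commute_map ρ hker
    (Commute.symm (mem_centralizer_iff.mp hg (ρ x) (mem_map_of_mem ρ hx)))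

end CentralKernel

theorem stmt0_general {H K : Type*} [Group H] [Group K] (ρ : H →* K)
    (hker : ρ.ker ≤ Subgroup.center H)
    (X : Subgroup H) :
    Subgroup.centralizer (X : Set H) ≤
        (Subgroup.centralizer ((X.map ρ) : Set K)).comap ρ ∧
      ((Subgroup.centralizer (X : Set H)).subgroupOf
        ((Subgroup.centralizer ((X.map ρ) : Set K)).comap ρ)).Normal ∧
      ∀ k : ℕ, (∀ x ∈ X, x ^ k = 1) →
        ∀ h ∈ (Subgroup.centralizer ((X.map ρ) : Set K)).comap ρ,
          h ^ k ∈ Subgroup.centralizer (X : Set H) := by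
  have hle : centralizer (X : Set H) ≤ (centralizer (X.map ρ : Set K)).comap ρ := fun c hc =>
    map_centralizer_le_centralizer_image (X : Set H) ρ (mem_map_of_mem ρ hc)
  refine ⟨hle, (normal_subgroupOf_iff hle).mpr ?_, ?_⟩
  · intro c p hc hp
    rw [mem_centralizer_iff]
    intro x hx
    have hcx : Commute c (p⁻¹ * x * p⁻¹⁻¹) :=
      Commute.conj_right_of_commutatorElement_mem_center
        (commutatorElement_mem_center_of_mem_comap_centralizer ρ hker (inv_mem hp) hx)
        (mem_centralizer_iff.mp hc x hx).symm
    have hconj := (Commute.conj_iff p).mpr hcx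
    rw [show p * (p⁻¹ * x * p⁻¹⁻¹) * p⁻¹ = x by group] at hconj
    exact hconj.symm
  · intro k hk h hh
    rw [mem_centralizer_iff]
    intro x hx
    exact (commute_pow_of_commutatorElement_mem_center
      (commutatorElement_mem_center_of_mem_comap_centralizer ρ hker hh hx) (hk x hx)).symm

/-- Lemma 1.2.1 (first assertion, exponent of `X` part): if `ρ : H → K` is a surjective
group homomorphism with central kernel and `X ≤ H`, and
`P = ρ⁻¹(C_K(ρ(X)))`, then `C_H(X)` is a normal subgroup of `P`, and for every `k`
annihilating `X`, `h ^ k ∈ C_H(X)` for every `h ∈ P`. -/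
theorem stmt0 {H K : Type*} [Group H] [Group K] (ρ : H →* K)
    (hsurj : Function.Surjective ρ) (hker : ρ.ker ≤ Subgroup.center H)
    (X : Subgroup H) :
    Subgroup.centralizer (X : Set H) ≤
        (Subgroup.centralizer ((X.map ρ) : Set K)).comap ρ ∧
      ((Subgroup.centralizer (X : Set H)).subgroupOf
        ((Subgroup.centralizer ((X.map ρ) : Set K)).comap ρ)).Normal ∧
      ∀ k : ℕ, (∀ x ∈ X, x ^ k = 1) →
        ∀ h ∈ (Subgroup.centralizer ((X.map ρ) : Set K)).comap ρ,
          h ^ k ∈ Subgroup.centralizer (X : Set H) :=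
  stmt0_general ρ hker X
end

section
/- Let H and K be groups and ρ : H → K a surjective group homomorphism whose kernel is contained in the center Z(H). Let X be a subgroup of H and set P := ρ⁻¹(C_K(ρ(X))). Then for every natural number e such that z^e = 1 for all z ∈ ker ρ ∩ [H,H], one has h^e ∈ C_H(X) for every h ∈ P; in other words, the exponent of P/C_H(X) divides the exponent of ker ρ ∩ [H,H]. (First assertion of Lemma 1.2.1.) -/
/-!
For `h ∈ P` and `x ∈ X`, the commutator `z = ⁅h, x⁆` lies in `ker ρ ∩ [H, H]`, because `ρ h`
commutes with `ρ x`. Since `ker ρ` is central, `z` commutes with `h`, and then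
`⁅h ^ e, x⁆ = z ^ e = 1`, i.e. `h ^ e` commutes with `x`.
-/

open scoped commutatorElement

theorem commutatorElement_pow_left_of_commute {G : Type*} [Group G] {a b : G}
    (ha : Commute a ⁅a, b⁆) (n : ℕ) : ⁅a ^ n, b⁆ = ⁅a, b⁆ ^ n := by
  induction n with
  | zero => simp
  | succ n ih =>
    rw [pow_succ', commutatorElement_mul_left_eq_conj_mul, ih, (ha.pow_right n).eq,
      mul_inv_cancel_right, pow_succ]

theorem MonoidHom.commutatorElement_mem_ker_iff {G G' : Type*} [Group G] [Group G']
    (f : G →* G') (a b : G) : ⁅a, b⁆ ∈ f.ker ↔ Commute (f a) (f b) := by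
  rw [mem_ker, map_commutatorElement, commutatorElement_eq_one_iff_commute]

theorem commutatorElement_mem_commutator {G : Type*} [Group G] (a b : G) :
    ⁅a, b⁆ ∈ commutator G :=
  Subgroup.commutator_mem_commutator (Subgroup.mem_top a) (Subgroup.mem_top b)

theorem stmt1_general {H K : Type*} [Group H] [Group K] (ρ : H →* K)
    (hker : ρ.ker ≤ Subgroup.center H)
    (X : Subgroup H) :
    ∀ e : ℕ, (∀ z ∈ ρ.ker ⊓ commutator H, z ^ e = 1) →
      ∀ h ∈ (Subgroup.centralizer ((X.map ρ) : Set K)).comap ρ,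
        h ^ e ∈ Subgroup.centralizer (X : Set H) := by
  intro e he h hh x hx
  have hρ : Commute (ρ h) (ρ x) :=
    (Subgroup.mem_centralizer_iff.mp hh (ρ x) ⟨x, hx, rfl⟩).symm
  have hz_ker : ⁅h, x⁆ ∈ ρ.ker := (ρ.commutatorElement_mem_ker_iff h x).mpr hρ
  have hz_comm : Commute h ⁅h, x⁆ := Subgroup.mem_center_iff.mp (hker hz_ker) h
  have hpow : ⁅h ^ e, x⁆ = 1 := by
    rw [commutatorElement_pow_left_of_commute hz_comm,
      he _ ⟨hz_ker, commutatorElement_mem_commutator h x⟩]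
  exact (commutatorElement_eq_one_iff_commute.mp hpow).eq.symm

/-- Lemma 1.2.1 (first assertion, exponent of `ker ρ ∩ [H,H]` part): if `ρ : H → K` is a
surjective group homomorphism with central kernel, `X ≤ H` and
`P = ρ⁻¹(C_K(ρ(X)))`, then for every `e` annihilating `ker ρ ∩ [H,H]`,
`h ^ e ∈ C_H(X)` for every `h ∈ P`. -/
theorem stmt1 {H K : Type*} [Group H] [Group K] (ρ : H →* K)
    (hsurj : Function.Surjective ρ) (hker : ρ.ker ≤ Subgroup.center H)
    (X : Subgroup H) :
    ∀ e : ℕ, (∀ z ∈ ρ.ker ⊓ commutator H, z ^ e = 1) →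
      ∀ h ∈ (Subgroup.centralizer ((X.map ρ) : Set K)).comap ρ,
        h ^ e ∈ Subgroup.centralizer (X : Set H) :=
  stmt1_general ρ hker X
end

section
/- Let H and K be groups and ρ : H → K a surjective group homomorphism whose kernel is contained in the center Z(H). Let X be a finite subgroup of H such that ker ρ ∩ [H,H] is finite and the orders |X| and |ker ρ ∩ [H,H]| are coprime (equivalently, X is a finite π-group and ker ρ ∩ [H,H] is a finite π′-group for some set of primes π). Then ρ(C_H(X)) = C_K(ρ(X)). (Second assertion of Lemma 1.2.1.) -/
/-!
If `ρ h` centralizes `ρ x`, the commutator `c = ⁅h, x⁆` lies in `ker ρ ∩ [H, H]`, so it is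
central. Then `h x h⁻¹ = c x` with `c` commuting with `x`, hence `1 = h x^n h⁻¹ = c^n x^n = c^n`
for `n = |X|`. The order of `c` divides both `n` and `|ker ρ ∩ [H, H]|`, so `c = 1`.
-/

open scoped commutatorElement

theorem commutatorElement_pow_eq_one {G : Type*} [Group G] {g x : G} {n : ℕ}
    (hcx : Commute ⁅g, x⁆ x) (hx : x ^ n = 1) : ⁅g, x⁆ ^ n = 1 := by
  have hconj : ⁅g, x⁆ * x = g * x * g⁻¹ := by rw [commutatorElement_def]; group
  have := hcx.mul_pow n
  rwa [hconj, conj_pow, hx, mul_one, mul_inv_cancel, mul_one, eq_comm] at this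

theorem Subgroup.eq_one_of_pow_eq_one_of_coprime {G : Type*} [Group G] {N : Subgroup G}
    {c : G} (hc : c ∈ N) {n : ℕ} (hn : c ^ n = 1) (hcop : n.Coprime (Nat.card N)) : c = 1 :=
  orderOf_eq_one_iff.mp <| Nat.eq_one_of_dvd_one <|
    hcop ▸ Nat.dvd_gcd (orderOf_dvd_of_pow_eq_one hn) (N.orderOf_dvd_natCard hc)

theorem MonoidHom.commutatorElement_mem_ker_inf_commutator {G K : Type*} [Group G] [Group K]
    (ρ : G →* K) {g x : G} (h : Commute (ρ g) (ρ x)) : ⁅g, x⁆ ∈ ρ.ker ⊓ commutator G :=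
  Subgroup.mem_inf.mpr
    ⟨by rwa [MonoidHom.mem_ker, map_commutatorElement, commutatorElement_eq_one_iff_commute],
      commutator_def G ▸
        Subgroup.commutator_mem_commutator (Subgroup.mem_top g) (Subgroup.mem_top x)⟩

theorem MonoidHom.commute_of_commute_map {G K : Type*} [Group G] [Group K] (ρ : G →* K)
    (hker : ρ.ker ≤ Subgroup.center G) {g x : G} {n : ℕ} (hx : x ^ n = 1)
    (hcop : n.Coprime (Nat.card ↥(ρ.ker ⊓ commutator G))) (h : Commute (ρ g) (ρ x)) :
    Commute g x := by
  have hmem := ρ.commutatorElement_mem_ker_inf_commutator h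
  have hcentral : Commute ⁅g, x⁆ x :=
    ((Subgroup.mem_center_iff.mp (hker (Subgroup.mem_inf.mp hmem).1)) x).symm
  exact commutatorElement_eq_one_iff_commute.mp <|
    Subgroup.eq_one_of_pow_eq_one_of_coprime hmem (commutatorElement_pow_eq_one hcentral hx) hcop

theorem stmt2_general {H K : Type*} [Group H] [Group K] (ρ : H →* K)
    (hsurj : Function.Surjective ρ) (hker : ρ.ker ≤ Subgroup.center H)
    (X : Subgroup H)
    (hcop : Nat.Coprime (Nat.card ↥X) (Nat.card ↥(ρ.ker ⊓ commutator H))) :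
    (Subgroup.centralizer (X : Set H)).map ρ =
      Subgroup.centralizer ((X.map ρ) : Set K) := by
  refine le_antisymm (Subgroup.map_centralizer_le_centralizer_image _ ρ) fun k hk => ?_
  obtain ⟨h, rfl⟩ := hsurj k
  refine ⟨h, Subgroup.mem_centralizer_iff.mpr fun x hx => ?_, rfl⟩
  have hxn : x ^ Nat.card X = 1 := orderOf_dvd_iff_pow_eq_one.mp (X.orderOf_dvd_natCard hx)
  exact (ρ.commute_of_commute_map hker hxn hcop
    (Subgroup.mem_centralizer_iff.mp hk (ρ x) ⟨x, hx, rfl⟩).symm).symm.eq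

/-- Lemma 1.2.1 (second assertion): if `ρ : H → K` is a surjective group homomorphism with
central kernel, `X ≤ H` is finite, `ker ρ ∩ [H,H]` is finite, and their orders are coprime,
then `ρ(C_H(X)) = C_K(ρ(X))`. -/
theorem stmt2 {H K : Type*} [Group H] [Group K] (ρ : H →* K)
    (hsurj : Function.Surjective ρ) (hker : ρ.ker ≤ Subgroup.center H)
    (X : Subgroup H) [Finite ↥X] [Finite ↥(ρ.ker ⊓ commutator H)]
    (hcop : Nat.Coprime (Nat.card ↥X) (Nat.card ↥(ρ.ker ⊓ commutator H))) :
    (Subgroup.centralizer (X : Set H)).map ρ =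
      Subgroup.centralizer ((X.map ρ) : Set K) :=
  stmt2_general ρ hsurj hker X hcop
end

section
/- Let N be a positive even integer, let b_1, …, b_N be natural numbers such that b_j > b_1 for all j ≠ 1, let ε : {1,…,N} → {−1, 1} be any function, and let q ≥ 2 be an integer. Then ∏_{j=1}^N (q^{b_j} − ε(j)) ≠ ∏_{j=1}^N (q^{b_j} + ε(j)). (The Lemma in the proof of Proposition 5.2, used to distinguish the degrees of two unipotent characters of a finite classical group.) -/
/-!
Split off the factor of index `1` and put `a = q ^ b₁`, `x_j = q ^ b_j` for `j ≠ 1`, so that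
`q a ∣ x_j`. Over the remaining odd number of indices, `U = ∏ (x_j + ε_j)` and
`V = ∏ (ε_j - x_j) = -∏ (x_j - ε_j)` agree modulo `2qa` (factorwise they differ by `2x_j`), and
`U ≡ E := ∏ ε_j` modulo `qa`. An equality of the two full products then gives
`2aE ≡ 0` modulo `2qa`, i.e. `q ∣ E = ±1`, which is impossible for `q ≥ 2`.
-/

open Finset

theorem prod_sub_ne_prod_add {ι : Type*} {s : Finset ι} (hs : Odd #s) {q a : ℤ}
    (hq : ¬IsUnit q) (ha : a ≠ 0) {x e : ι → ℤ} (hx : ∀ i ∈ s, q * a ∣ x i)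
    (he : ∀ i ∈ s, IsUnit (e i)) (e₀ : ℤ) :
    (a - e₀) * ∏ i ∈ s, (x i - e i) ≠ (a + e₀) * ∏ i ∈ s, (x i + e i) := by
  intro h
  set U := ∏ i ∈ s, (x i + e i)
  set V := ∏ i ∈ s, (e i - x i)
  set E := ∏ i ∈ s, e i
  have hUV : 2 * (q * a) ∣ V - U := Int.ModEq.dvd <| Int.ModEq.prod fun i hi =>
    Int.modEq_iff_dvd.2 <| by
      rw [show e i - x i - (x i + e i) = -(2 * x i) by ring, dvd_neg]
      exact mul_dvd_mul_left 2 (hx i hi)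
  have hUE : q * a ∣ E - U := Int.ModEq.dvd <| Int.ModEq.prod fun i hi =>
    Int.modEq_iff_dvd.2 (by simpa using hx i hi)
  have hW : ∏ i ∈ s, (x i - e i) = -V :=
    calc ∏ i ∈ s, (x i - e i) = ∏ i ∈ s, -(e i - x i) := by simp_rw [neg_sub]
      _ = -V := by rw [prod_neg, hs.neg_one_pow, neg_one_mul]
  have h2aE : 2 * a * E = (e₀ - a) * (V - U) + a * (2 * (E - U)) := by
    rw [hW] at h
    linear_combination -h
  have hqE : q ∣ E := by
    have h2a : 2 * a ≠ 0 := mul_ne_zero two_ne_zero ha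
    refine (mul_dvd_mul_iff_left h2a).1 ?_
    rw [h2aE, show 2 * a * q = 2 * (q * a) by ring]
    exact dvd_add (hUV.mul_left _) ((mul_dvd_mul_left 2 hUE).mul_left a)
  exact hq (isUnit_of_dvd_unit hqE (IsUnit.prod_iff.2 he))

/-- The Lemma in the proof of Proposition 5.2: for an even number `N ≥ 1` of natural
numbers `b_j` with `b_j > b_1` for `j ≠ 1`, any signs `ε j ∈ {−1, 1}` and any integer
`q ≥ 2`, the products `∏ (q ^ b_j − ε j)` and `∏ (q ^ b_j + ε j)` are different. -/
theorem stmt5 (N : ℕ) (hNpos : 0 < N) (hNeven : Even N) (b : Fin N → ℕ)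
    (hb : ∀ j : Fin N, j ≠ ⟨0, hNpos⟩ → b ⟨0, hNpos⟩ < b j)
    (ε : Fin N → ℤ) (hε : ∀ j, ε j = 1 ∨ ε j = -1)
    (q : ℤ) (hq : 2 ≤ q) :
    (∏ j : Fin N, (q ^ b j - ε j)) ≠ ∏ j : Fin N, (q ^ b j + ε j) := by
  set j₀ : Fin N := ⟨0, hNpos⟩
  have hodd : Odd #(univ.erase j₀) := by
    rw [card_erase_of_mem (mem_univ _), card_univ, Fintype.card_fin]
    exact Nat.Even.sub_odd hNpos hNeven odd_one
  have hq_unit : ¬IsUnit q := by rw [Int.isUnit_iff]; omega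
  have hx : ∀ j ∈ univ.erase j₀, q * q ^ b j₀ ∣ q ^ b j := fun j hj =>
    pow_succ' q (b j₀) ▸ pow_dvd_pow q (hb j (ne_of_mem_erase hj))
  have hε_unit : ∀ j ∈ univ.erase j₀, IsUnit (ε j) := fun j _ => by
    rcases hε j with h | h <;> simp [h]
  rw [← mul_prod_erase univ _ (mem_univ j₀), ← mul_prod_erase univ _ (mem_univ j₀)]
  exact prod_sub_ne_prod_add hodd hq_unit (pow_ne_zero _ (by omega)) hx hε_unit (ε j₀)
end

section
/- Let B be a finite set of natural numbers, let a ∈ B and d ≥ 1 with a + d ∉ B, and let B′ = (B ∖ {a}) ∪ {a + d}. Then v(B′) − v(B) = Σ_{c ∈ B, a < c < a+d} (c − a) + d · #{c ∈ B : c > a + d}. In particular v(B′) ≥ v(B), with equality if and only if a is the maximum of B. (The hook-addition computation on β-sets in the proof of Proposition 5.2(a), governing the p-valuation of degrees of unipotent characters.) -/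
/-!
Writing `v(B)` as the sum of `min b c` over the unordered pairs `{b, c} ⊆ B`, inserting a new
element `x` into `B` adds `Σ_{c ∈ B} min x c`. Hence moving `a` to `a + d` changes `v` by
`Σ_{c ∈ B, c ≠ a} (min (a + d) c - min a c)`, a sum of nonnegative terms: `c - a` when
`a < c < a + d`, `d` when `c > a + d`, and `0` when `c < a`. It vanishes iff no `c ∈ B`
exceeds `a`.
-/

/-- The valuation of a β-set: `v(B) = Σ_{b ∈ B} b · #{c ∈ B : b < c}`; if
`B = {b_1 < … < b_m}` this equals `Σ_s (m − s)·b_s`. -/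
def vBeta (B : Finset ℕ) : ℕ := ∑ b ∈ B, b * (B.filter fun c => b < c).card

open Finset

lemma vBeta_eq_sum_sum (B : Finset ℕ) :
    vBeta B = ∑ b ∈ B, ∑ c ∈ B, if b < c then b else 0 := by
  refine sum_congr rfl fun b _ => ?_
  rw [← sum_filter, sum_const, smul_eq_mul, mul_comm]

lemma vBeta_insert {C : Finset ℕ} {x : ℕ} (hx : x ∉ C) :
    vBeta (insert x C) = vBeta C + ∑ c ∈ C, min x c := by
  have hmin : ∀ c ∈ C, min x c = (if x < c then x else 0) + (if c < x then c else 0) := by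
    intro c hc
    have : c ≠ x := ne_of_mem_of_not_mem hc hx
    split_ifs <;> omega
  simp only [vBeta_eq_sum_sum, sum_insert hx, lt_irrefl, if_false, sum_add_distrib,
    sum_congr rfl hmin]
  ring

lemma vBeta_insert_erase {B : Finset ℕ} {a b : ℕ} (hab : a ≤ b) (ha : a ∈ B) (hb : b ∉ B) :
    vBeta (insert b (B.erase a)) = vBeta B + ∑ c ∈ B.erase a, (min b c - min a c) := by
  have hbC : b ∉ B.erase a := fun h => hb (mem_of_mem_erase h)
  have hsplit : vBeta (insert b (B.erase a)) =
      vBeta (insert a (B.erase a)) + ∑ c ∈ B.erase a, (min b c - min a c) := by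
    rw [vBeta_insert hbC, vBeta_insert (notMem_erase a B), add_assoc, ← sum_add_distrib]
    congr 1
    exact sum_congr rfl fun c _ => (Nat.add_sub_of_le (min_le_min_right c hab)).symm
  rwa [insert_erase ha] at hsplit

lemma min_add_sub_min (a d c : ℕ) (hc : c ≠ a + d) :
    min (a + d) c - min a c =
      (if a < c ∧ c < a + d then c - a else 0) + (if a + d < c then d else 0) := by
  split_ifs <;> omega

lemma sum_min_add_sub_min {B : Finset ℕ} {a d : ℕ} (had : a + d ∉ B) :
    ∑ c ∈ B.erase a, (min (a + d) c - min a c) =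
      (∑ c ∈ B.filter fun c => a < c ∧ c < a + d, (c - a)) +
        d * (B.filter fun c => a + d < c).card := by
  rw [sum_congr rfl fun c hc => min_add_sub_min a d c fun h => had (h ▸ mem_of_mem_erase hc),
    sum_add_distrib, sum_erase _ (by simp), sum_erase _ (by simp), ← sum_filter, ← sum_filter,
    sum_const, smul_eq_mul, mul_comm]

lemma sum_min_add_sub_min_eq_zero_iff {B : Finset ℕ} {a d : ℕ} (hd : d ≠ 0) :
    ∑ c ∈ B.erase a, (min (a + d) c - min a c) = 0 ↔ ∀ c ∈ B, c ≤ a := by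
  rw [sum_eq_zero_iff]
  refine ⟨fun h c hc => ?_, fun h c hc => ?_⟩
  · by_contra hlt
    have := h c (mem_erase.mpr ⟨by omega, hc⟩)
    omega
  · have := h c (mem_of_mem_erase hc)
    omega

theorem stmt6_general (B : Finset ℕ) (a d : ℕ) (ha : a ∈ B) (had : a + d ∉ B) :
    vBeta (insert (a + d) (B.erase a)) =
        vBeta B + (∑ c ∈ B.filter fun c => a < c ∧ c < a + d, (c - a)) +
          d * (B.filter fun c => a + d < c).card ∧
      vBeta B ≤ vBeta (insert (a + d) (B.erase a)) ∧
      (vBeta (insert (a + d) (B.erase a)) = vBeta B ↔ ∀ c ∈ B, c ≤ a) := by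
  have hd : d ≠ 0 := by
    rintro rfl
    exact had ha
  rw [vBeta_insert_erase (Nat.le_add_right a d) ha had]
  refine ⟨by rw [sum_min_add_sub_min had, add_assoc], Nat.le_add_right _ _, ?_⟩
  rw [Nat.add_eq_left, sum_min_add_sub_min_eq_zero_iff hd]

/-- The hook-addition computation on β-sets from the proof of Proposition 5.2(a):
if `a ∈ B`, `d ≥ 1` and `a + d ∉ B`, and `B′` is obtained from `B` by replacing `a` with
`a + d`, then `v(B′) = v(B) + Σ_{c ∈ B, a < c < a+d} (c − a) + d·#{c ∈ B : c > a + d}`;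
in particular `v(B′) ≥ v(B)` with equality iff `a` is the maximum of `B`. -/
theorem stmt6 (B : Finset ℕ) (a d : ℕ) (ha : a ∈ B) (hd : 1 ≤ d) (had : a + d ∉ B) :
    vBeta (insert (a + d) (B.erase a)) =
        vBeta B + (∑ c ∈ B.filter fun c => a < c ∧ c < a + d, (c - a)) +
          d * (B.filter fun c => a + d < c).card ∧
      vBeta B ≤ vBeta (insert (a + d) (B.erase a)) ∧
      (vBeta (insert (a + d) (B.erase a)) = vBeta B ↔ ∀ c ∈ B, c ≤ a) :=
  stmt6_general B a d ha had
end

section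
/- Let B be a finite nonempty set of natural numbers, d ≥ 1 and t ≥ 1, and let B′ be obtained from B by a sequence of t successive d-hook additions (at each step some element a of the current set is replaced by a + d, where a + d is not in the current set). Then v(B′) ≥ v(B); moreover v(B′) = v(B) if and only if every step replaces the maximum of the current set, in which case B′ = (B ∖ {max B}) ∪ {max B + t·d} and the sequence of intermediate sets is uniquely determined. (Uniqueness of the β-set of minimal valuation in a d-series and of the removal sequence, from the proof of Proposition 5.2(a.1).) -/
namespace vBeta

open Finset

theorem two_mul_add_sum (B : Finset ℕ) :
    2 * vBeta B + ∑ b ∈ B, b = ∑ b ∈ B, ∑ c ∈ B, min b c := by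
  have hsplit : ∀ b ∈ B, ∑ c ∈ B, min b c =
      (∑ c ∈ B, if c < b then c else 0) + (∑ c ∈ B, if b < c then b else 0)
        + ∑ c ∈ B, if b = c then b else 0 := by
    intro b _
    rw [← sum_add_distrib, ← sum_add_distrib]
    exact sum_congr rfl fun c _ => by split_ifs <;> omega
  have hbelow : ∑ b ∈ B, ∑ c ∈ B, (if c < b then c else 0) = vBeta B := by
    rw [sum_comm]
    exact sum_congr rfl fun c _ => by rw [← sum_filter, sum_const, smul_eq_mul, mul_comm]
  have habove : ∑ b ∈ B, ∑ c ∈ B, (if b < c then b else 0) = vBeta B :=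
    sum_congr rfl fun b _ => by rw [← sum_filter, sum_const, smul_eq_mul, mul_comm]
  have hdiag : ∑ b ∈ B, ∑ c ∈ B, (if b = c then b else 0) = ∑ b ∈ B, b :=
    sum_congr rfl fun b hb => by rw [sum_ite_eq, if_pos hb]
  rw [sum_congr rfl hsplit, sum_add_distrib, sum_add_distrib, hbelow, habove, hdiag]
  ring

theorem sum_sum_min_insert {C : Finset ℕ} {y : ℕ} (hy : y ∉ C) :
    ∑ b ∈ insert y C, ∑ c ∈ insert y C, min b c
      = ∑ b ∈ C, ∑ c ∈ C, min b c + 2 * ∑ x ∈ C, min y x + y := by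
  have hrow : ∀ b ∈ C, ∑ c ∈ insert y C, min b c = min y b + ∑ c ∈ C, min b c :=
    fun b _ => by rw [sum_insert hy, min_comm]
  rw [sum_insert hy, sum_insert hy, sum_congr rfl hrow, sum_add_distrib, min_self]
  ring

theorem insert_add_sum_min {C : Finset ℕ} {y z : ℕ} (hy : y ∉ C) (hz : z ∉ C) :
    vBeta (insert z C) + ∑ x ∈ C, min y x = vBeta (insert y C) + ∑ x ∈ C, min z x := by
  have hWy := two_mul_add_sum (insert y C)
  have hWz := two_mul_add_sum (insert z C)
  rw [sum_sum_min_insert hy, sum_insert hy] at hWy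
  rw [sum_sum_min_insert hz, sum_insert hz] at hWz
  omega

variable {B : Finset ℕ} {a b : ℕ}

theorem replace_add_sum_min (ha : a ∈ B) (hb : b ∉ B) :
    vBeta (insert b (B.erase a)) + ∑ x ∈ B.erase a, min a x
      = vBeta B + ∑ x ∈ B.erase a, min b x := by
  have key := insert_add_sum_min (notMem_erase a B) (fun h => hb (mem_of_mem_erase h))
  rwa [insert_erase ha] at key

theorem le_replace (ha : a ∈ B) (hb : b ∉ B) (hab : a ≤ b) :
    vBeta B ≤ vBeta (insert b (B.erase a)) := by
  have := replace_add_sum_min ha hb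
  have : ∑ x ∈ B.erase a, min a x ≤ ∑ x ∈ B.erase a, min b x :=
    sum_le_sum fun x _ => min_le_min_right x hab
  omega

theorem replace_eq_iff (ha : a ∈ B) (hb : b ∉ B) (hab : a ≤ b) :
    vBeta (insert b (B.erase a)) = vBeta B ↔ ∀ c ∈ B, c ≤ a := by
  have hlt : a < b := lt_of_le_of_ne hab fun h => hb (h ▸ ha)
  have hmin : ∀ x ∈ B.erase a, min a x ≤ min b x := fun x _ => min_le_min_right x hab
  have := replace_add_sum_min ha hb
  rw [show vBeta (insert b (B.erase a)) = vBeta B ↔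
      ∑ x ∈ B.erase a, min a x = ∑ x ∈ B.erase a, min b x by omega,
    sum_eq_sum_iff_of_le hmin]
  refine ⟨fun h c hc => ?_, fun h x hx => ?_⟩
  · rcases eq_or_ne c a with rfl | hca
    · exact le_rfl
    · have := h c (mem_erase.mpr ⟨hca, hc⟩)
      omega
  · have := h x (mem_of_mem_erase hx)
    omega

end vBeta

section ChainOfSteps

variable {α : Type*} [PartialOrder α] {f : ℕ → α} {t : ℕ}

theorem le_of_forall_le_succ (hf : ∀ i < t, f i ≤ f (i + 1)) {i j : ℕ} (hij : i ≤ j)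
    (hjt : j ≤ t) : f i ≤ f j := by
  induction j, hij using Nat.le_induction with
  | base => exact le_rfl
  | succ j _ ih => exact (ih (by omega)).trans (hf j (by omega))

theorem eq_iff_forall_succ_eq_of_forall_le_succ (hf : ∀ i < t, f i ≤ f (i + 1)) :
    f t = f 0 ↔ ∀ i < t, f (i + 1) = f i := by
  refine ⟨fun h i hi => le_antisymm ?_ (hf i hi), fun h => ?_⟩
  · calc f (i + 1) ≤ f t := le_of_forall_le_succ hf hi le_rfl
      _ = f 0 := h
      _ ≤ f i := le_of_forall_le_succ hf (Nat.zero_le i) hi.le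
  · induction t with
    | zero => rfl
    | succ t ih =>
      rw [h t t.lt_succ_self, ih (fun i hi => hf i (by omega)) (fun i hi => h i (by omega))]

end ChainOfSteps

theorem Finset.insert_add_erase_of_forall_le {E : Finset ℕ} {m a d : ℕ} (hE : ∀ x ∈ E, x < m)
    (ha : a ∈ insert m E) (hmax : ∀ c ∈ insert m E, c ≤ a) :
    insert (a + d) ((insert m E).erase a) = insert (m + d) E := by
  have ham : a = m := by
    rcases mem_insert.mp ha with h | h
    · exact h
    · exact absurd (hmax m (mem_insert_self m E)) (not_le.mpr (hE a h))
  rw [ham, erase_insert fun h => lt_irrefl m (hE m h)]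

theorem stmt7_general (d t : ℕ) (Bs : ℕ → Finset ℕ) (a : ℕ → ℕ)
    (hB0 : (Bs 0).Nonempty)
    (hstep : ∀ i < t, a i ∈ Bs i ∧ a i + d ∉ Bs i ∧
      Bs (i + 1) = insert (a i + d) ((Bs i).erase (a i))) :
    vBeta (Bs 0) ≤ vBeta (Bs t) ∧
      (vBeta (Bs t) = vBeta (Bs 0) ↔ ∀ i < t, ∀ c ∈ Bs i, c ≤ a i) ∧
      ((∀ i < t, ∀ c ∈ Bs i, c ≤ a i) →
        ∀ i ≤ t, Bs i =
          insert ((Bs 0).max' hB0 + i * d) ((Bs 0).erase ((Bs 0).max' hB0))) := by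
  have hmono : ∀ i < t, vBeta (Bs i) ≤ vBeta (Bs (i + 1)) := fun i hi => by
    obtain ⟨ha, had, hBs⟩ := hstep i hi
    rw [hBs]
    exact vBeta.le_replace ha had (Nat.le_add_right _ _)
  refine ⟨le_of_forall_le_succ hmono (Nat.zero_le t) le_rfl, ?_, fun hall i hi => ?_⟩
  · rw [eq_iff_forall_succ_eq_of_forall_le_succ hmono]
    refine forall₂_congr fun i hi => ?_
    obtain ⟨ha, had, hBs⟩ := hstep i hi
    rw [hBs]
    exact vBeta.replace_eq_iff ha had (Nat.le_add_right _ _)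
  set M := (Bs 0).max' hB0
  have hbelow : ∀ n, ∀ x ∈ (Bs 0).erase M, x < M + n * d := fun n x hx =>
    lt_of_lt_of_le (lt_of_le_of_ne ((Bs 0).le_max' x (Finset.mem_of_mem_erase hx))
      (Finset.ne_of_mem_erase hx)) (Nat.le_add_right M _)
  induction i with
  | zero => simp [M, Finset.insert_erase ((Bs 0).max'_mem hB0)]
  | succ n ih =>
    obtain ⟨ha, -, hBs⟩ := hstep n hi
    have hmax := hall n hi
    rw [ih (by omega)] at ha hmax
    rw [hBs, ih (by omega), Finset.insert_add_erase_of_forall_le (hbelow n) ha hmax,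
      add_assoc, add_one_mul]

/-- From the proof of Proposition 5.2(a.1): if `B′ = Bs t` is obtained from a nonempty
β-set `B = Bs 0` by `t ≥ 1` successive `d`-hook additions (`d ≥ 1`), then
`v(B′) ≥ v(B)`, with equality iff every step replaces the maximum of the current set;
in that case each intermediate set is uniquely determined:
`Bs i = (B ∖ {max B}) ∪ {max B + i·d}` for all `i ≤ t`. -/
theorem stmt7 (d t : ℕ) (hd : 1 ≤ d) (ht : 1 ≤ t) (Bs : ℕ → Finset ℕ) (a : ℕ → ℕ)
    (hB0 : (Bs 0).Nonempty)
    (hstep : ∀ i < t, a i ∈ Bs i ∧ a i + d ∉ Bs i ∧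
      Bs (i + 1) = insert (a i + d) ((Bs i).erase (a i))) :
    vBeta (Bs 0) ≤ vBeta (Bs t) ∧
      (vBeta (Bs t) = vBeta (Bs 0) ↔ ∀ i < t, ∀ c ∈ Bs i, c ≤ a i) ∧
      ((∀ i < t, ∀ c ∈ Bs i, c ≤ a i) →
        ∀ i ≤ t, Bs i =
          insert ((Bs 0).max' hB0 + i * d) ((Bs 0).erase ((Bs 0).max' hB0))) :=
  stmt7_general d t Bs a hB0 hstep
end

section
/- Let M and N be groups acting on a set S such that the two actions commute (m·(n·s) = n·(m·s) for all m ∈ M, n ∈ N, s ∈ S), and fix λ ∈ S. Then X := {x ∈ M : x·λ ∈ N·λ} is a subgroup of M containing the stabilizer Stab_M(λ), N₀ := {n ∈ N : n·λ ∈ M·λ} is a subgroup of N containing Stab_N(λ), and there is a bijection from the left coset space X/Stab_M(λ) onto N₀/Stab_N(λ) sending the coset of x ∈ X to the coset of any n ∈ N with x·λ = n·λ. In particular, if M and N are finite, then |X| · |Stab_N(λ)| = |Stab_M(λ)| · |N₀|. (The counting argument in the proof of Proposition 2.4.2(a), applied there to the commuting actions of M^F/L^F and N_{G^F}(L)/L^F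 on Irr(L^F).) -/
/-!
Because the actions commute, `x • (N • λ) = N • (x • λ)`, so `X` is the stabilizer of the set
`N • λ` in `M`, and its orbit through `λ` is `M • λ ∩ N • λ`; symmetrically `N₀` is the
stabilizer of `M • λ` with the same orbit through `λ`. Orbit–stabilizer identifies both
`X / Stab_M(λ)` and `N₀ / Stab_N(λ)` with this common orbit, and Lagrange gives the count.
-/

open MulAction Pointwise

theorem Subgroup.card_mul_relIndex {G : Type*} [Group G] {K H : Subgroup G} (h : K ≤ H) :
    Nat.card K * K.relIndex H = Nat.card H := by
  rw [← Nat.card_congr (Subgroup.subgroupOfEquivOfLe h).toEquiv]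
  exact (K.subgroupOf H).card_mul_index

namespace MulAction

variable {M N S : Type*} [Group M] [Group N] [MulAction M S] [MulAction N S]

theorem stabilizer_subgroupOf (H : Subgroup M) (l : S) :
    (stabilizer M l).subgroupOf H = stabilizer H l :=
  rfl

variable [SMulCommClass M N S]

theorem smul_orbit_eq_orbit_smul_of_comm (x : M) (l : S) : x • orbit N l = orbit N (x • l) := by
  ext s
  simp only [Set.mem_smul_set, mem_orbit_iff, exists_exists_eq_and, smul_comm x]

theorem mem_stabilizer_orbit_iff {x : M} {l : S} :
    x ∈ stabilizer M (orbit N l) ↔ x • l ∈ orbit N l := by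
  rw [mem_stabilizer_iff, smul_orbit_eq_orbit_smul_of_comm, orbit_eq_iff]

theorem stabilizer_le_stabilizer_orbit (l : S) : stabilizer M l ≤ stabilizer M (orbit N l) :=
  fun x hx => mem_stabilizer_orbit_iff.2 (by rw [mem_stabilizer_iff.1 hx]; exact mem_orbit_self l)

theorem orbit_stabilizer_orbit (l : S) :
    orbit (stabilizer M (orbit N l)) l = orbit M l ∩ orbit N l := by
  ext s
  constructor
  · rintro ⟨⟨x, hx⟩, rfl⟩
    exact ⟨mem_orbit l x, mem_stabilizer_orbit_iff.1 hx⟩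
  · rintro ⟨⟨x, rfl⟩, hx⟩
    exact ⟨⟨x, mem_stabilizer_orbit_iff.2 hx⟩, rfl⟩

variable (M N) in
noncomputable def quotientStabilizerOrbitEquiv (l : S) :
    stabilizer M (orbit N l) ⧸ stabilizer (stabilizer M (orbit N l)) l ≃
      stabilizer N (orbit M l) ⧸ stabilizer (stabilizer N (orbit M l)) l :=
  haveI := SMulCommClass.symm M N S
  (orbitEquivQuotientStabilizer _ l).symm.trans <|
    (Equiv.setCongr <| by rw [orbit_stabilizer_orbit, orbit_stabilizer_orbit, Set.inter_comm]).trans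
      (orbitEquivQuotientStabilizer _ l)

theorem quotientStabilizerOrbitEquiv_mk {l : S} (x : stabilizer M (orbit N l))
    (n : stabilizer N (orbit M l)) (h : (x : M) • l = (n : N) • l) :
    quotientStabilizerOrbitEquiv M N l x = n := by
  have := SMulCommClass.symm M N S
  rw [quotientStabilizerOrbitEquiv, Equiv.trans_apply, Equiv.trans_apply,
    ← Equiv.eq_symm_apply]
  ext
  simpa only [Equiv.setCongr_apply, orbitEquivQuotientStabilizer_symm_apply,
    Subgroup.smul_def] using h

theorem relIndex_stabilizer_orbit_eq (l : S) :
    (stabilizer M l).relIndex (stabilizer M (orbit N l)) =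
      (stabilizer N l).relIndex (stabilizer N (orbit M l)) := by
  rw [Subgroup.relIndex, Subgroup.relIndex, stabilizer_subgroupOf, stabilizer_subgroupOf]
  exact Nat.card_congr (quotientStabilizerOrbitEquiv M N l)

end MulAction

/-- The counting argument in the proof of Proposition 2.4.2(a): if `M` and `N` act on a
set `S` with commuting actions and `l ∈ S`, then `X = {x ∈ M : x·l ∈ N·l}` is a subgroup
of `M` containing `Stab_M(l)`, `N₀ = {n ∈ N : n·l ∈ M·l}` is a subgroup of `N` containing
`Stab_N(l)`, and there is a bijection `X/Stab_M(l) ≃ N₀/Stab_N(l)` sending the coset of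
`x` to the coset of any `n` with `x·l = n·l`; in particular, when `M` and `N` are finite,
`|X| · |Stab_N(l)| = |Stab_M(l)| · |N₀|`. -/
theorem stmt9 {M N S : Type*} [Group M] [Group N] [MulAction M S] [MulAction N S]
    (hcomm : ∀ (m : M) (n : N) (s : S), m • n • s = n • m • s) (l : S) :
    ∃ (X : Subgroup M) (N₀ : Subgroup N),
      (X : Set M) = {x : M | x • l ∈ MulAction.orbit N l} ∧
      (N₀ : Set N) = {n : N | n • l ∈ MulAction.orbit M l} ∧
      MulAction.stabilizer M l ≤ X ∧ MulAction.stabilizer N l ≤ N₀ ∧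
      ∃ (f : (↥X ⧸ (MulAction.stabilizer M l).subgroupOf X) ≃
          (↥N₀ ⧸ (MulAction.stabilizer N l).subgroupOf N₀)),
        (∀ (x : ↥X) (n : ↥N₀), (x : M) • l = (n : N) • l →
          f (QuotientGroup.mk x) = QuotientGroup.mk n) ∧
        (Finite M → Finite N →
          Nat.card ↥X * Nat.card ↥(MulAction.stabilizer N l) =
            Nat.card ↥(MulAction.stabilizer M l) * Nat.card ↥N₀) := by
  have : SMulCommClass M N S := ⟨hcomm⟩
  have := SMulCommClass.symm M N S
  have hleM := stabilizer_le_stabilizer_orbit (M := M) (N := N) l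
  have hleN := stabilizer_le_stabilizer_orbit (M := N) (N := M) l
  refine ⟨_, _, Set.ext fun _ => mem_stabilizer_orbit_iff, Set.ext fun _ => mem_stabilizer_orbit_iff,
    hleM, hleN, ?_⟩
  rw [stabilizer_subgroupOf, stabilizer_subgroupOf]
  refine ⟨quotientStabilizerOrbitEquiv M N l, quotientStabilizerOrbitEquiv_mk, fun _ _ => ?_⟩
  rw [← Subgroup.card_mul_relIndex hleM, ← Subgroup.card_mul_relIndex hleN,
    relIndex_stabilizer_orbit_eq]
  ring
end
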